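/- arXiv:2204.01481 — 3 statements merged into one kernel-verified Lean document; each statement's English description precedes it below -/
import Mathlib

section
/- Let P ∈ ℂ[x][y, y⁻¹] be a Laurent polynomial with con(P) = P, and suppose P = C · y^p · P₁^{r₁} where C ∈ ℂ, p ∈ ℤ, and P₁ ∈ ℂ[x,y] is not divisible by y. Then there exist a constant C₁ ∈ ℂ and an integer p₁ such that P₁ = C₁ · y^{p₁} · con(P₁). -/
open LaurentPolynomial

/-- Conjugation on Laurent polynomials over `ℂ[x]`:
`con (Σⱼ aⱼ(x) yᵛʲ) = Σⱼ conj(aⱼ)(x) y⁻ᵛʲ`. -/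
noncomputable def con (P : LaurentPolynomial (Polynomial ℂ)) :
    LaurentPolynomial (Polynomial ℂ) :=
  AddMonoidAlgebra.ofCoeff (Finsupp.mapRange (Polynomial.map (starRingEnd ℂ)) (Polynomial.map_zero _)
    (Finsupp.equivMapDomain (Equiv.neg ℤ) P.coeff))

/-- Evaluate a Laurent polynomial `P(x,y) = Σⱼ aⱼ(x) yᵛʲ` at `y = e^{ivx}`, `x` real. -/
noncomputable def evalLR (P : LaurentPolynomial (Polynomial ℂ)) (v : ℚ) (x : ℝ) : ℂ :=
  ∑ n ∈ P.coeff.support, Polynomial.eval (x : ℂ) (P.coeff n) * Complex.exp (Complex.I * v * x) ^ n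

/-!
Write `d = deg_y P₁` and let `P₁*` be the conjugate reciprocal of `P₁`, i.e. the reversal in `y`
of `P₁` with conjugated coefficients, so that `con P₁ = y^(-d) P₁*`; as `P₁` has a nonzero leading
coefficient, `y ∤ P₁*`. Applying `con` to `P = C yᵖ P₁^r` gives
`C P₁^r y^(2p + r d) = C̄ (P₁*)^r`, and since neither side's polynomial part is divisible by `y`,
the monomial factor must be trivial. Hence `P₁^r` and `(P₁*)^r` are associated in the integrally
closed domain `ℂ[x][y]`, so `P₁* = c P₁` for a nonzero constant `c`.
-/

namespace Polynomial

variable {R : Type*}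

lemma not_X_dvd_reverse [Semiring R] {p : R[X]} (hp : p ≠ 0) : ¬ X ∣ p.reverse := by
  rw [X_dvd_iff, coeff_zero_reverse]
  exact leadingCoeff_ne_zero.2 hp

lemma not_X_dvd_C_mul_pow [CommRing R] [IsDomain R] {a : R} (ha : a ≠ 0) {p : R[X]}
    (hp : ¬ X ∣ p) (n : ℕ) : ¬ X ∣ C a * p ^ n := by
  rw [prime_X.dvd_mul, X_dvd_iff, coeff_C_zero]
  exact not_or_intro ha fun h => hp (prime_X.dvd_of_dvd_pow h)

lemma eq_of_toLaurent_mul_T_eq [CommSemiring R] {f g : R[X]} (hf : ¬ X ∣ f) (hg : ¬ X ∣ g)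
    {k : ℤ} (h : toLaurent f * T k = toLaurent g) : f = g := by
  have of_nat : ∀ {f g : R[X]} (n : ℕ), ¬ X ∣ g → toLaurent f * T n = toLaurent g → f = g := by
    intro f g n hg h
    have hfg : f * X ^ n = g := toLaurent_injective (by rwa [map_mul, toLaurent_X_pow])
    obtain rfl : n = 0 := by
      by_contra hn
      exact hg (hfg ▸ (dvd_pow_self X hn).mul_left f)
    simpa using hfg
  obtain ⟨n, rfl | rfl⟩ := Int.eq_nat_or_neg k
  · exact of_nat n hg h
  · exact (of_nat n hf (by rw [← h, mul_T_assoc, neg_add_cancel, T_zero, mul_one])).symm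

lemma isUnit_C_C [Field R] {a : R} (ha : a ≠ 0) : IsUnit (C (C a) : R[X][X]) :=
  isUnit_C.2 (isUnit_C.2 ha.isUnit)

lemma exists_eq_mul_C_C_of_associated [CommRing R] [IsDomain R] {p q : R[X][X]}
    (h : Associated p q) : ∃ c : R, IsUnit c ∧ q = p * C (C c) := by
  obtain ⟨u, rfl⟩ := h
  obtain ⟨a, ha, hau⟩ := isUnit_iff.1 u.isUnit
  obtain ⟨c, hc, rfl⟩ := isUnit_iff.1 ha
  exact ⟨c, hc, by rw [hau]⟩

end Polynomial

lemma associated_of_mul_pow_eq_mul_pow {R : Type*} [CommRing R] [IsDomain R]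
    [IsIntegrallyClosed R] {u v a b : R} (hu : IsUnit u) (hv : IsUnit v) {n : ℕ} (hn : n ≠ 0)
    (h : u * a ^ n = v * b ^ n) : Associated a b := by
  rw [← Associated.pow_iff hn]
  refine (associated_unit_mul_left _ _ hu).symm.trans ?_
  rw [h]
  exact associated_unit_mul_left _ _ hv

section Conjugation

open Polynomial

noncomputable def conRingHom : LaurentPolynomial ℂ[X] →+* LaurentPolynomial ℂ[X] :=
  (AddMonoidAlgebra.mapRingHom ℤ (mapRingHom (starRingEnd ℂ))).comp invert.toRingHom

lemma coe_conRingHom : ⇑conRingHom = con := by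
  ext P n
  simp [conRingHom, con]

lemma con_eq_map_invert (P : LaurentPolynomial ℂ[X]) :
    con P = AddMonoidAlgebra.mapRingHom ℤ (mapRingHom (starRingEnd ℂ)) (invert P) := by
  rw [← coe_conRingHom]
  rfl

lemma con_mul (P Q : LaurentPolynomial ℂ[X]) : con (P * Q) = con P * con Q := by
  simp only [← coe_conRingHom, map_mul]

lemma con_pow (P : LaurentPolynomial ℂ[X]) (n : ℕ) : con (P ^ n) = con P ^ n := by
  simp only [← coe_conRingHom, map_pow]

lemma con_C (a : ℂ[X]) :
    con (LaurentPolynomial.C a) = LaurentPolynomial.C (a.map (starRingEnd ℂ)) := by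
  rw [con_eq_map_invert, invert_C, ← single_eq_C, AddMonoidAlgebra.mapRingHom_single,
    coe_mapRingHom, single_eq_C]

lemma con_T (n : ℤ) : con (T n : LaurentPolynomial ℂ[X]) = T (-n) := by
  rw [con_eq_map_invert, invert_T, T, AddMonoidAlgebra.mapRingHom_single, map_one]

lemma con_toLaurent (q : ℂ[X][X]) :
    con (toLaurent q) = invert (toLaurent (q.map (mapRingHom (starRingEnd ℂ)))) := by
  induction q using Polynomial.induction_on' with
  | add f g hf hg =>
    simp only [← coe_conRingHom, map_add, Polynomial.map_add] at hf hg ⊢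
    rw [hf, hg]
  | monomial n a => simp [← C_mul_X_pow_eq_monomial, con_mul, con_C, con_T]

noncomputable def conjReverse (q : ℂ[X][X]) : ℂ[X][X] :=
  (q.map (mapRingHom (starRingEnd ℂ))).reverse

lemma not_X_dvd_conjReverse {q : ℂ[X][X]} (hq : q ≠ 0) : ¬ X ∣ conjReverse q :=
  not_X_dvd_reverse <| (Polynomial.map_ne_zero_iff (map_injective _ (starRingEnd ℂ).injective)).2 hq

lemma con_toLaurent_mul_T_natDegree (q : ℂ[X][X]) :
    con (toLaurent q) * T q.natDegree = toLaurent (conjReverse q) := by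
  rw [conjReverse, toLaurent_reverse, con_toLaurent,
    natDegree_map_eq_of_injective (map_injective _ (starRingEnd ℂ).injective)]

lemma toLaurent_C_mul_pow_mul_T_eq_of_con_eq {c : ℂ} {p : ℤ} {q : ℂ[X][X]} {r : ℕ}
    (h : con (LaurentPolynomial.C (Polynomial.C c) * T p * toLaurent q ^ r) =
      LaurentPolynomial.C (Polynomial.C c) * T p * toLaurent q ^ r) :
    toLaurent (Polynomial.C (Polynomial.C c) * q ^ r) * T (p + (p + r * q.natDegree)) =
      toLaurent (Polynomial.C (Polynomial.C (starRingEnd ℂ c)) * conjReverse q ^ r) := by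
  calc _ = LaurentPolynomial.C (Polynomial.C c) * T p * toLaurent q ^ r *
          (T p * T q.natDegree ^ r) := by
        rw [T_pow, T_add, T_add, map_mul, map_pow, toLaurent_C]; ring
    _ = LaurentPolynomial.C (Polynomial.C (starRingEnd ℂ c)) * (T (-p) * T p) *
          (con (toLaurent q) * T q.natDegree) ^ r := by
        rw [← h, con_mul, con_mul, con_pow, con_C, con_T, Polynomial.map_C]; ring
    _ = _ := by
        rw [← T_add, neg_add_cancel, T_zero, con_toLaurent_mul_T_natDegree, map_mul, map_pow,
          toLaurent_C, mul_one]

lemma exists_eq_C_mul_T_mul_con_of_associated {q : ℂ[X][X]} (h : Associated q (conjReverse q)) :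
    ∃ (c : ℂ) (p : ℤ),
      toLaurent q = LaurentPolynomial.C (Polynomial.C c) * T p * con (toLaurent q) := by
  obtain ⟨c, hc, hqc⟩ := exists_eq_mul_C_C_of_associated h
  refine ⟨c⁻¹, q.natDegree, ?_⟩
  rw [mul_assoc, mul_comm (T _), con_toLaurent_mul_T_natDegree, hqc, map_mul, toLaurent_C,
    mul_left_comm, ← map_mul, ← map_mul, inv_mul_cancel₀ hc.ne_zero, map_one, map_one, mul_one]

end Conjugation

theorem stmt_6 (P : LaurentPolynomial (Polynomial ℂ)) (hP : con P = P)
    (C : ℂ) (hC : C ≠ 0) (p : ℤ) (r₁ : ℕ) (hr₁ : 1 ≤ r₁)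
    (P₁ : Polynomial (Polynomial ℂ)) (hy : ¬ (Polynomial.X ∣ P₁))
    (hfac : P = LaurentPolynomial.C (Polynomial.C C) * LaurentPolynomial.T p *
      (Polynomial.toLaurent P₁) ^ r₁) :
    ∃ (C₁ : ℂ) (p₁ : ℤ), Polynomial.toLaurent P₁ =
      LaurentPolynomial.C (Polynomial.C C₁) * LaurentPolynomial.T p₁ *
        con (Polynomial.toLaurent P₁) := by
  subst hfac
  have hP₁ : P₁ ≠ 0 := by
    rintro rfl
    exact hy (dvd_zero _)
  have hC' : starRingEnd ℂ C ≠ 0 := (map_ne_zero _).2 hC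
  have hpow := Polynomial.eq_of_toLaurent_mul_T_eq
    (Polynomial.not_X_dvd_C_mul_pow (Polynomial.C_ne_zero.2 hC) hy r₁)
    (Polynomial.not_X_dvd_C_mul_pow (Polynomial.C_ne_zero.2 hC') (not_X_dvd_conjReverse hP₁) r₁)
    (toLaurent_C_mul_pow_mul_T_eq_of_con_eq hP)
  exact exists_eq_C_mul_T_mul_con_of_associated <| associated_of_mul_pow_eq_mul_pow
    (Polynomial.isUnit_C_C hC) (Polynomial.isUnit_C_C hC') (by omega) hpow
end

section
/- The function F(x) = (2/3)x + x·cos(x) − sin(x) has an unbounded set of positive real roots: for every T > 0 there exists x₀ > T with F(x₀) = 0. -/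
open Real

theorem stmt_10 :
    ∀ T : ℝ, 0 < T → ∃ x₀ : ℝ, T < x₀ ∧
      (2/3) * x₀ + x₀ * Real.cos x₀ - Real.sin x₀ = 0 := by
  intro T hT
  set F : ℝ → ℝ := fun x => (2/3) * x + x * Real.cos x - Real.sin x with hF
  have hcont : Continuous F := by fun_prop
  obtain ⟨n, hn⟩ := exists_nat_gt T
  have ha : ∃ a:ℝ, a = π/2 + n * (2 * π) := ⟨_, rfl⟩
  obtain ⟨a, ha⟩ := ha
  have hb : ∃ b:ℝ, b = π + n * (2 * π) := ⟨_, rfl⟩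
  obtain ⟨b, hb⟩ := hb
  have hpi := Real.pi_gt_three
  have hnn : (0:ℝ) ≤ n := Nat.cast_nonneg n
  have haT : T < a := by
    rw [ha]; nlinarith
  have hab : a < b := by rw [ha, hb]; nlinarith
  have hFa : 0 < F a := by
    have hc : Real.cos a = 0 := by
      rw [ha]; rw [Real.cos_add_nat_mul_two_pi, Real.cos_pi_div_two]
    have hs : Real.sin a = 1 := by
      rw [ha]; rw [Real.sin_add_nat_mul_two_pi, Real.sin_pi_div_two]
    simp only [hF, hc, hs]
    rw [ha]; nlinarith
  have hFb : F b < 0 := by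
    have hc : Real.cos b = -1 := by
      rw [hb]; rw [Real.cos_add_nat_mul_two_pi, Real.cos_pi]
    have hs : Real.sin b = 0 := by
      rw [hb]; rw [Real.sin_add_nat_mul_two_pi, Real.sin_pi]
    simp only [hF, hc, hs]
    rw [hb]; nlinarith
  have : (0:ℝ) ∈ Set.Icc (F b) (F a) := ⟨le_of_lt hFb, le_of_lt hFa⟩
  have := intermediate_value_Icc' (le_of_lt hab) hcont.continuousOn this
  obtain ⟨x₀, hx₀, hFx₀⟩ := this
  exact ⟨x₀, lt_of_lt_of_le haT hx₀.1, hFx₀⟩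
end

section
/- The inequality (2/3)x + (1/3)x·cos(x) − sin(x) > 0 holds for all x in (0, ∞). -/
/-! For `x ≤ 3`, the alternating Taylor bounds `cos x ≥ 1 - x²/2 + x⁴/24 - x⁶/720` and
`sin x ≤ x - x³/6 + x⁵/120` (each integrated from the previous one, starting at `0`) bound the
expression below by `x⁵ (12 - x²) / 2160 > 0`. For `x > 3`, `x (1 + cos x) / 3 ≥ 0` and
`x / 3 > 1 ≥ sin x`. -/

open Real Set

lemma le_of_hasDerivAt_le {f g f' g' : ℝ → ℝ} {a x : ℝ} (hf : ∀ y, HasDerivAt f (f' y) y)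
    (hg : ∀ y, HasDerivAt g (g' y) y) (ha : f a ≤ g a) (hle : ∀ y, a < y → f' y ≤ g' y)
    (hx : a ≤ x) : f x ≤ g x := by
  have hmono : MonotoneOn (fun y => g y - f y) (Ici a) := by
    refine monotoneOn_of_hasDerivWithinAt_nonneg (convex_Ici a)
      (fun y _ => ((hg y).sub (hf y)).continuousAt.continuousWithinAt)
      (fun y _ => ((hg y).sub (hf y)).hasDerivWithinAt) fun y hy => ?_
    rw [interior_Ici, mem_Ioi] at hy
    exact sub_nonneg.2 (hle y hy)
  linarith [hmono self_mem_Ici (mem_Ici.2 hx) hx]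

lemma cos_le_quartic {x : ℝ} (hx : 0 ≤ x) : cos x ≤ 1 - x ^ 2 / 2 + x ^ 4 / 24 := by
  refine le_of_hasDerivAt_le (g := fun y => 1 - y ^ 2 / 2 + y ^ 4 / 24)
    (g' := fun y => -(y - y ^ 3 / 6)) hasDerivAt_cos (fun y => ?_) (by norm_num)
    (fun y hy => by linarith [sin_ge_sub_cube hy.le]) hx
  exact (((hasDerivAt_pow 2 y).div_const 2).const_sub 1).add
    ((hasDerivAt_pow 4 y).div_const 24) |>.congr_deriv (by ring)

lemma sin_le_quintic {x : ℝ} (hx : 0 ≤ x) : sin x ≤ x - x ^ 3 / 6 + x ^ 5 / 120 := by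
  refine le_of_hasDerivAt_le (g := fun y => y - y ^ 3 / 6 + y ^ 5 / 120)
    hasDerivAt_sin (fun y => ?_) (by norm_num) (fun y hy => cos_le_quartic hy.le) hx
  exact ((hasDerivAt_id y).sub ((hasDerivAt_pow 3 y).div_const 6)).add
    ((hasDerivAt_pow 5 y).div_const 120) |>.congr_deriv (by ring)

lemma sextic_le_cos {x : ℝ} (hx : 0 ≤ x) : 1 - x ^ 2 / 2 + x ^ 4 / 24 - x ^ 6 / 720 ≤ cos x := by
  refine le_of_hasDerivAt_le (f := fun y => 1 - y ^ 2 / 2 + y ^ 4 / 24 - y ^ 6 / 720)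
    (f' := fun y => -(y - y ^ 3 / 6 + y ^ 5 / 120)) (fun y => ?_) hasDerivAt_cos (by norm_num)
    (fun y hy => neg_le_neg (sin_le_quintic hy.le)) hx
  exact ((((hasDerivAt_pow 2 y).div_const 2).const_sub 1).add
    ((hasDerivAt_pow 4 y).div_const 24)).sub ((hasDerivAt_pow 6 y).div_const 720)
    |>.congr_deriv (by ring)

lemma pow_five_mul_twelve_sub_sq_le {x : ℝ} (hx : 0 ≤ x) :
    x ^ 5 * (12 - x ^ 2) / 2160 ≤ 2 / 3 * x + 1 / 3 * x * cos x - sin x := by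
  have hcos := mul_le_mul_of_nonneg_left (sextic_le_cos hx) hx
  linarith [sin_le_quintic hx]

lemma sin_lt_of_three_lt {x : ℝ} (hx : 3 < x) : sin x < 2 / 3 * x + 1 / 3 * x * cos x := by
  have hcos : 0 ≤ x * (1 + cos x) := mul_nonneg (by linarith) (by linarith [neg_one_le_cos x])
  linarith [sin_le_one x]

theorem stmt_13 :
    ∀ x : ℝ, 0 < x →
      0 < (2/3) * x + (1/3) * x * Real.cos x - Real.sin x := by
  intro x hx
  rcases le_or_gt x 3 with hx3 | hx3
  · refine lt_of_lt_of_le ?_ (pow_five_mul_twelve_sub_sq_le hx.le)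
    have hx12 : 0 < 12 - x ^ 2 := by nlinarith
    positivity
  · linarith [sin_lt_of_three_lt hx3]
end
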